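/- Let d_1,…,d_n be reals with d_1 = d_n = 1. Then D·P = Q·D; moreover, both products equal the matrix whose only nonzero entry is a 1 in position (1, n). -/

import Mathlib

/-!
Row and column sums of `D` telescope: expanding `∏ (1 - d_k)` as
`1 - ∑_i d_i ∏_{k<i} (1 - d_k)`, row `i` of `D` sums to `d_i ∏_{k<i} (1 - d_k)` and column `j`
to `d_j ∏_{k>j} (1 - d_k)`. When `d_1 = d_n = 1` these are the indicators of `i = 1` and of
`j = n`. Since `(D P)_{ij}` is the `i`-th row sum of `D` if `j = n` and `0` otherwise, and
`(Q D)_{ij}` is the `j`-th column sum if `i = 1` and `0` otherwise, both products are `E_{1n}`.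
-/

open Finset Matrix

/-- The matrix `D` with entries `d_{ij}`: `0` for `i < j`, `d_i` for `i = j`, and
`-d_j · (∏_{k=j+1}^{i-1} (1 - d_k)) · d_i` for `i > j`. -/
def Dmat (n : ℕ) (d : Fin n → ℝ) : Matrix (Fin n) (Fin n) ℝ :=
  Matrix.of fun i j =>
    if i < j then 0
    else if i = j then d i
    else -(d j) * (∏ k ∈ Finset.Ioo j i, (1 - d k)) * d i

/-- The matrix `P` whose last column consists of ones and all other entries are `0`. -/
def Pmat (n : ℕ) : Matrix (Fin n) (Fin n) ℝ :=
  Matrix.of fun _ j => if (j : ℕ) + 1 = n then 1 else 0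

/-- The matrix `Q` whose first row consists of ones and all other entries are `0`. -/
def Qmat (n : ℕ) : Matrix (Fin n) (Fin n) ℝ :=
  Matrix.of fun i _ => if (i : ℕ) = 0 then 1 else 0

section Telescoping

variable {ι R : Type*} [LinearOrder ι] [CommRing R]

theorem Finset.prod_one_sub_ordered' (s : Finset ι) (f : ι → R) :
    ∏ i ∈ s, (1 - f i) = 1 - ∑ i ∈ s, f i * ∏ j ∈ s with i < j, (1 - f j) :=
  Finset.prod_one_sub_ordered (ι := ιᵒᵈ) s f

end Telescoping

section Entries

variable {n : ℕ} (d : Fin n → ℝ)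

theorem Dmat_apply_of_lt {i j : Fin n} (h : i < j) : Dmat n d i j = 0 := by
  simp [Dmat, h]

theorem Dmat_apply_self (i : Fin n) : Dmat n d i i = d i := by
  simp [Dmat]

theorem Dmat_apply_of_gt {i j : Fin n} (h : j < i) :
    Dmat n d i j = -d j * (∏ k ∈ Ioo j i, (1 - d k)) * d i := by
  simp [Dmat, h.not_gt, h.ne']

theorem Dmat_row_sum (i : Fin n) : ∑ j, Dmat n d i j = d i * ∏ k ∈ Iio i, (1 - d k) := by
  have hsupp : ∑ j, Dmat n d i j = ∑ j ∈ Iic i, Dmat n d i j :=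
    (Finset.sum_subset (subset_univ _) fun j _ hj =>
      Dmat_apply_of_lt d (not_le.mp (Finset.mem_Iic.not.mp hj))).symm
  have hfilter : ∀ j ∈ Iio i, Ioo j i = {k ∈ Iio i | j < k} := fun j _ => by
    ext k; simp [and_comm]
  rw [hsupp, ← Iio_insert, sum_insert (by simp), Dmat_apply_self,
    Finset.prod_one_sub_ordered', mul_sub, mul_one, sub_eq_add_neg,
    mul_sum, ← sum_neg_distrib]
  refine congrArg _ (sum_congr rfl fun j hj => ?_)
  rw [Dmat_apply_of_gt d (mem_Iio.mp hj), hfilter j hj]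
  ring

theorem Dmat_col_sum (j : Fin n) : ∑ i, Dmat n d i j = d j * ∏ k ∈ Ioi j, (1 - d k) := by
  have hsupp : ∑ i, Dmat n d i j = ∑ i ∈ Ici j, Dmat n d i j :=
    (Finset.sum_subset (subset_univ _) fun i _ hi =>
      Dmat_apply_of_lt d (not_le.mp (Finset.mem_Ici.not.mp hi))).symm
  have hfilter : ∀ i ∈ Ioi j, Ioo j i = {k ∈ Ioi j | k < i} := fun i _ => by
    ext k; simp
  rw [hsupp, ← Ioi_insert, sum_insert (by simp), Dmat_apply_self,
    Finset.prod_one_sub_ordered, mul_sub, mul_one, sub_eq_add_neg,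
    mul_sum, ← sum_neg_distrib]
  refine congrArg _ (sum_congr rfl fun i hi => ?_)
  rw [Dmat_apply_of_gt d (mem_Ioi.mp hi), hfilter i hi]
  ring

end Entries

section Products

variable {n : ℕ}

theorem mul_Pmat_apply (A : Matrix (Fin n) (Fin n) ℝ) (i j : Fin n) :
    (A * Pmat n) i j = (∑ k, A i k) * if (j : ℕ) + 1 = n then 1 else 0 := by
  simp only [mul_apply, Pmat, of_apply, sum_mul]

theorem Qmat_mul_apply (A : Matrix (Fin n) (Fin n) ℝ) (i j : Fin n) :
    (Qmat n * A) i j = (if (i : ℕ) = 0 then 1 else 0) * ∑ k, A k j := by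
  simp only [mul_apply, Qmat, of_apply, mul_sum]

variable {d : Fin n → ℝ}

theorem Dmat_row_sum_of_first_eq_one {h : 0 < n} (hd : d ⟨0, h⟩ = 1) (i : Fin n) :
    ∑ j, Dmat n d i j = if (i : ℕ) = 0 then 1 else 0 := by
  rw [Dmat_row_sum]
  split_ifs with hi
  · obtain rfl : i = ⟨0, h⟩ := Fin.ext hi
    rw [hd, one_mul]
    exact prod_eq_one fun k hk =>
      absurd (mem_Iio.mp hk) (not_lt.mpr (Fin.le_def.mpr (Nat.zero_le _)))
  · exact mul_eq_zero_of_right _ <| prod_eq_zero (i := ⟨0, h⟩)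
      (mem_Iio.mpr (Fin.lt_def.mpr (Nat.pos_of_ne_zero hi))) (by rw [hd, sub_self])

theorem Dmat_col_sum_of_last_eq_one {h : n - 1 < n} (hd : d ⟨n - 1, h⟩ = 1) (j : Fin n) :
    ∑ i, Dmat n d i j = if (j : ℕ) + 1 = n then 1 else 0 := by
  rw [Dmat_col_sum]
  split_ifs with hj
  · obtain rfl : j = ⟨n - 1, h⟩ := Fin.ext (Nat.eq_sub_of_add_eq hj)
    rw [hd, one_mul]
    exact prod_eq_one fun k hk =>
      absurd (mem_Ioi.mp hk) (not_lt.mpr (Fin.le_def.mpr (by omega)))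
  · exact mul_eq_zero_of_right _ <| prod_eq_zero (i := ⟨n - 1, h⟩)
      (mem_Ioi.mpr (Fin.lt_def.mpr (show (j : ℕ) < n - 1 by omega))) (by rw [hd, sub_self])

end Products

theorem stmt_4 (n : ℕ) (hn : 2 ≤ n) (d : Fin n → ℝ)
    (hd1 : d ⟨0, by omega⟩ = 1) (hdn : d ⟨n - 1, by omega⟩ = 1) :
    Dmat n d * Pmat n = Qmat n * Dmat n d ∧
    Dmat n d * Pmat n =
      Matrix.of (fun i j : Fin n => if (i : ℕ) = 0 ∧ (j : ℕ) + 1 = n then (1 : ℝ) else 0) ∧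
    Qmat n * Dmat n d =
      Matrix.of (fun i j : Fin n => if (i : ℕ) = 0 ∧ (j : ℕ) + 1 = n then (1 : ℝ) else 0) := by
  have hDP : Dmat n d * Pmat n =
      Matrix.of (fun i j : Fin n => if (i : ℕ) = 0 ∧ (j : ℕ) + 1 = n then (1 : ℝ) else 0) := by
    ext i j
    rw [mul_Pmat_apply, Dmat_row_sum_of_first_eq_one hd1, ite_zero_mul_ite_zero, one_mul, of_apply]
  have hQD : Qmat n * Dmat n d =
      Matrix.of (fun i j : Fin n => if (i : ℕ) = 0 ∧ (j : ℕ) + 1 = n then (1 : ℝ) else 0) := by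
    ext i j
    rw [Qmat_mul_apply, Dmat_col_sum_of_last_eq_one hdn, ite_zero_mul_ite_zero, one_mul, of_apply]
  exact ⟨hDP.trans hQD.symm, hDP, hQD⟩
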